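/- arXiv:1005.3387 — 2 statements merged into one kernel-verified Lean document; each statement's English description precedes it below -/
import Mathlib

section
/- Let x, y ∈ (Z^d)^N and suppose for a finite family of disjoint boxes Q_1, …, Q_M ⊂ Z^d, each of diameter at most 2(N−1)L, that every component x_k lies in exactly one Q_i, every component y_j lies within max-norm distance 2L of some Q_i (attributing y_j to that box), and the occupancy numbers satisfy |{k : x_k ∈ Q_i}| = |{j : y_j attributed to Q_i}| for every i. Then the symmetrized distance satisfies d_S(x, y) ≤ 2NL, where d_S(x,y) = min over permutations τ of {1,…,N} of max_j ‖x_{τ(j)} − y_j‖_∞. -/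
noncomputable section

/-- Matching lemma for configurations with equal cluster occupancy numbers: if each `x_k` lies
in exactly one of the pairwise disjoint boxes `Q_i` (each of diameter ≤ `2(N-1)L`), each `y_j`
lies within max-norm distance `2L` of the box it is attributed to, and the occupancy numbers of
`x` and `y` coincide for every box, then the symmetrized distance satisfies
`d_S(x,y) ≤ 2NL`, i.e. there is a permutation `τ` with `‖x_{τ(j)} - y_j‖_∞ ≤ 2NL` for all `j`. -/
theorem matching_occupancy_symmetrized_dist {d N M : ℕ} (L : ℝ) (hL : 0 ≤ L)
    (x y : Fin N → Fin d → ℤ) (Q : Fin M → Finset (Fin d → ℤ))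
    (hdisj : ∀ i i', i ≠ i' → Disjoint (Q i) (Q i'))
    (hdiam : ∀ i, Metric.diam ((Q i : Set (Fin d → ℤ))) ≤ 2 * ((N : ℝ) - 1) * L)
    (g : Fin N → Fin M) (hg : ∀ k, x k ∈ Q (g k))
    (f : Fin N → Fin M)
    (hf : ∀ j, Metric.infDist (y j) ((Q (f j) : Set (Fin d → ℤ))) ≤ 2 * L)
    (hocc : ∀ i, (Finset.univ.filter fun k => g k = i).card
                  = (Finset.univ.filter fun j => f j = i).card) :
    ∃ τ : Equiv.Perm (Fin N), ∀ j, dist (x (τ j)) (y j) ≤ 2 * (N : ℝ) * L := by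
  classical
  -- bijections between fibers of `f` and `g`
  let e : ∀ i : Fin M,
      {j // j ∈ Finset.univ.filter fun j => f j = i}
        ≃ {k // k ∈ Finset.univ.filter fun k => g k = i} :=
    fun i => Finset.equivOfCardEq (hocc i).symm
  have hmem : ∀ j : Fin N, j ∈ Finset.univ.filter fun j' => f j' = f j := by
    intro j; simp
  let t : Fin N → Fin N := fun j => ((e (f j)) ⟨j, hmem j⟩ : _).1
  have hgt : ∀ j, g (t j) = f j := by
    intro j
    have h2 := ((e (f j)) ⟨j, hmem j⟩).2
    rw [Finset.mem_filter] at h2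
    exact h2.2
  have taux : ∀ (j : Fin N) (i : Fin M) (h : f j = i)
      (hm : j ∈ Finset.univ.filter fun j' => f j' = i),
      t j = ((e i) ⟨j, hm⟩ : _).1 := by
    intro j i h hm
    subst h
    rfl
  have hinj : Function.Injective t := by
    intro j j' h
    have hff : f j = f j' := by rw [← hgt j, ← hgt j', h]
    have hm' : j' ∈ Finset.univ.filter fun a => f a = f j := by
      simp [hff.symm]
    have h2 : t j' = ((e (f j)) ⟨j', hm'⟩ : _).1 := taux j' (f j) hff.symm hm'
    have h3 : ((e (f j)) ⟨j, hmem j⟩) = ((e (f j)) ⟨j', hm'⟩) :=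
      Subtype.ext (by rw [← h2]; exact h)
    have h4 := (e (f j)).injective h3
    exact congrArg Subtype.val h4
  let τ : Equiv.Perm (Fin N) := Equiv.ofBijective t (Finite.injective_iff_bijective.mp hinj)
  refine ⟨τ, fun j => ?_⟩
  have hτ : τ j = t j := rfl
  -- x (τ j) ∈ Q (f j)
  have hxQ : x (τ j) ∈ Q (f j) := by
    rw [hτ]
    have := hg (t j)
    rwa [hgt j] at this
  -- the set Q (f j) as a set is nonempty, finite, compact, bounded
  have hne : ((Q (f j) : Set (Fin d → ℤ))).Nonempty := ⟨x (τ j), hxQ⟩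
  have hfin : ((Q (f j) : Set (Fin d → ℤ))).Finite := (Q (f j)).finite_toSet
  obtain ⟨q, hqQ, hq⟩ := hfin.isCompact.exists_infDist_eq_dist hne (y j)
  have hdyq : dist (y j) q ≤ 2 * L := by rw [← hq]; exact hf j
  have hdxq : dist (x (τ j)) q ≤ 2 * ((N : ℝ) - 1) * L :=
    le_trans (Metric.dist_le_diam_of_mem hfin.isBounded hxQ hqQ) (hdiam (f j))
  have : dist (x (τ j)) (y j) ≤ dist (x (τ j)) q + dist q (y j) := dist_triangle _ _ _
  have hN : 1 ≤ (N : ℝ) := by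
    have : 0 < N := Fin.pos j
    exact_mod_cast this
  calc dist (x (τ j)) (y j) ≤ dist (x (τ j)) q + dist q (y j) := dist_triangle _ _ _
    _ ≤ 2 * ((N : ℝ) - 1) * L + 2 * L := by
        rw [dist_comm q]; exact add_le_add hdxq hdyq
    _ = 2 * (N : ℝ) * L := by ring
end
end

section
/- Let x, y ∈ (Z^d)^N with d_S(x, y) > 2(N+1)L, where d_S is the symmetrized max-norm distance. Then the pair of cubes C_L(x), C_L(y) ⊂ (Z^d)^N is weakly separable: there exists a parallelepiped Q ⊂ Z^d of diameter at most 2NL and index sets J_1, J_2 ⊆ {1,…,N} with |J_1| > |J_2| such that Π_{J_1} C_L(x) ∪ Π_{J_2} C_L(y) ⊆ Q and Π_{J_2^c} C_L(y) ∩ Q = ∅. -/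
noncomputable section

/-- The `N`-particle cube `C_L(u) = {v : ‖v - u‖_∞ ≤ L}` in the configuration space `(ℤ^d)^N`. -/
def cube {d N : ℕ} (L : ℝ) (u : Fin N → Fin d → ℤ) : Set (Fin N → Fin d → ℤ) :=
  {v | dist v u ≤ L}

/-- The projection `Π_J C = ⋃_{j ∈ J} {v_j : v ∈ C} ⊆ ℤ^d` of a set of configurations. -/
def proj {d N : ℕ} (J : Finset (Fin N)) (C : Set (Fin N → Fin d → ℤ)) : Set (Fin d → ℤ) :=
  ⋃ j ∈ J, (fun v => v j) '' C

/-- `Q ⊆ ℤ^d` is an axis-parallel parallelepiped (box). -/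
def IsBox {d : ℕ} (Q : Set (Fin d → ℤ)) : Prop :=
  ∃ a b : Fin d → ℤ, Q = {z | ∀ i, a i ≤ z i ∧ z i ≤ b i}

/-- The cube `C_L(x)` is weakly separable from `C_L(y)`: there is a parallelepiped
`Q ⊆ ℤ^d` of diameter at most `2NL` and index sets `J₁, J₂` with `|J₁| > |J₂|` such that
`Π_{J₁} C_L(x) ∪ Π_{J₂} C_L(y) ⊆ Q` and `Π_{J₂ᶜ} C_L(y) ∩ Q = ∅`. -/
def WeaklySepFrom {d N : ℕ} (L : ℝ) (x y : Fin N → Fin d → ℤ) : Prop :=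
  ∃ Q : Set (Fin d → ℤ), IsBox Q ∧ Metric.diam Q ≤ 2 * (N : ℝ) * L ∧
    ∃ J₁ J₂ : Finset (Fin N), J₂.card < J₁.card ∧
      proj J₁ (cube L x) ∪ proj J₂ (cube L y) ⊆ Q ∧
      proj J₂ᶜ (cube L y) ∩ Q = ∅

namespace SepProof

open Finset

variable {d : ℕ} {ι : Type*}

/-- A block is tight: any two of its points are at sup-distance at most `2(|B|-1)L`. -/
def tightB (L : ℝ) (p : ι → Fin d → ℤ) (B : Finset ι) : Prop :=
  ∀ u ∈ B, ∀ v ∈ B, dist (p u) (p v) ≤ 2 * ((B.card : ℝ) - 1) * L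

/-- Two blocks are separated: in some coordinate their hulls are more than `2L` apart. -/
def sepB (L : ℝ) (p : ι → Fin d → ℤ) (B C : Finset ι) : Prop :=
  ∃ i : Fin d, (∀ u ∈ B, ∀ v ∈ C, (p u i : ℝ) + 2 * L < (p v i : ℝ)) ∨
               (∀ u ∈ B, ∀ v ∈ C, (p v i : ℝ) + 2 * L < (p u i : ℝ))

lemma coord_abs_le (p : ι → Fin d → ℤ) {u v : ι} {r : ℝ}
    (h : dist (p u) (p v) ≤ r) (i : Fin d) :
    |(p u i : ℝ) - (p v i : ℝ)| ≤ r := by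
  have := (dist_le_pi_dist (p u) (p v) i).trans h
  rwa [Int.dist_eq] at this

lemma int_close {a b : ℤ} {L : ℝ} (h : dist a b ≤ L) : a - b ≤ ⌊L⌋ ∧ b - a ≤ ⌊L⌋ := by
  rw [Int.dist_eq] at h
  constructor
  · rw [Int.le_floor]; push_cast
    have := le_abs_self ((a : ℝ) - b); linarith
  · rw [Int.le_floor]; push_cast
    have := neg_abs_le ((a : ℝ) - b); linarith

lemma tightB_union {L : ℝ} (hL : 0 ≤ L) [DecidableEq ι] {p : ι → Fin d → ℤ}
    {B C : Finset ι} (hB : tightB L p B) (hC : tightB L p C)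
    (hd : Disjoint B C) (hns : ¬ sepB L p B C) : tightB L p (B ∪ C) := by
  have hcard : (B ∪ C).card = B.card + C.card := card_union_of_disjoint hd
  have hns' : ∀ i : Fin d,
      (∃ u ∈ B, ∃ v ∈ C, (p v i : ℝ) ≤ (p u i : ℝ) + 2 * L) ∧
      (∃ u ∈ B, ∃ v ∈ C, (p u i : ℝ) ≤ (p v i : ℝ) + 2 * L) := by
    intro i
    constructor
    · by_contra h
      push_neg at h
      exact hns ⟨i, Or.inl h⟩
    · by_contra h
      push_neg at h
      exact hns ⟨i, Or.inr h⟩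
  -- key cross bound
  have key : ∀ u ∈ B, ∀ v ∈ C, ∀ i : Fin d,
      |(p u i : ℝ) - (p v i : ℝ)| ≤ 2 * ((B.card : ℝ) - 1) * L + 2 * L + 2 * ((C.card : ℝ) - 1) * L := by
    intro u hu v hv i
    obtain ⟨h1, h2⟩ := hns' i
    obtain ⟨a, ha, b, hb, hab⟩ := h1
    obtain ⟨a', ha', b', hb', hab'⟩ := h2
    have hua' := coord_abs_le p (hB u hu a' ha') i
    have hb'v := coord_abs_le p (hC b' hb' v hv) i
    have hvb := coord_abs_le p (hC v hv b hb) i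
    have hau := coord_abs_le p (hB a ha u hu) i
    rw [abs_le] at hua' hb'v hvb hau ⊢
    constructor <;> nlinarith [hua'.1, hua'.2, hb'v.1, hb'v.2, hvb.1, hvb.2, hau.1, hau.2]
  intro u hu v hv
  have hne : (B ∪ C).Nonempty := ⟨u, hu⟩
  have h1 : (1 : ℝ) ≤ ((B ∪ C).card : ℝ) := by
    exact_mod_cast card_pos.mpr hne
  rw [dist_pi_le_iff (by nlinarith)]
  intro i
  rw [Int.dist_eq]
  rcases mem_union.mp hu with huB | huC <;> rcases mem_union.mp hv with hvB | hvC
  · have := coord_abs_le p (hB u huB v hvB) i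
    have hm : (B.card : ℝ) ≤ ((B ∪ C).card : ℝ) := by
      exact_mod_cast card_le_card (subset_union_left)
    nlinarith
  · have := key u huB v hvC i
    have : |(p u i : ℝ) - (p v i : ℝ)| ≤ 2 * (((B.card + C.card : ℕ) : ℝ) - 1) * L := by
      push_cast at this ⊢; linarith
    rw [hcard]; exact this
  · have := key v hvB u huC i
    rw [abs_sub_comm] at this
    have : |(p u i : ℝ) - (p v i : ℝ)| ≤ 2 * (((B.card + C.card : ℕ) : ℝ) - 1) * L := by
      push_cast at this ⊢; linarith
    rw [hcard]; exact this
  · have := coord_abs_le p (hC u huC v hvC) i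
    have hm : (C.card : ℝ) ≤ ((B ∪ C).card : ℝ) := by
      exact_mod_cast card_le_card (subset_union_right)
    nlinarith

lemma improve (L : ℝ) (hL : 0 ≤ L) [DecidableEq ι] (p : ι → Fin d → ℤ) :
    ∀ n (P : Finset (Finset ι)), P.card ≤ n →
    (∀ B ∈ P, B.Nonempty) →
    (∀ B ∈ P, ∀ C ∈ P, B ≠ C → Disjoint B C) →
    (∀ B ∈ P, tightB L p B) →
    ∃ P' : Finset (Finset ι), P'.biUnion id = P.biUnion id ∧
      (∀ B ∈ P', B.Nonempty) ∧
      (∀ B ∈ P', ∀ C ∈ P', B ≠ C → Disjoint B C) ∧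
      (∀ B ∈ P', tightB L p B) ∧
      (∀ B ∈ P', ∀ C ∈ P', B ≠ C → sepB L p B C) := by
  intro n
  induction n with
  | zero =>
    intro P hP hne hdis htight
    have hPe : P = ∅ := card_eq_zero.mp (Nat.le_zero.mp hP)
    refine ⟨P, rfl, hne, hdis, htight, ?_⟩
    intro B hB; rw [hPe] at hB; exact absurd hB (notMem_empty _)
  | succ n ih =>
    intro P hP hne hdis htight
    by_cases hsep : ∀ B ∈ P, ∀ C ∈ P, B ≠ C → sepB L p B C
    · exact ⟨P, rfl, hne, hdis, htight, hsep⟩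
    · push_neg at hsep
      obtain ⟨B, hB, C, hC, hBC, hnsep⟩ := hsep
      set P₁ : Finset (Finset ι) := insert (B ∪ C) ((P.erase B).erase C) with hP₁def
      have hCe : C ∈ P.erase B := mem_erase.mpr ⟨fun h => hBC h.symm, hC⟩
      have hcard2 : 1 < P.card := one_lt_card.mpr ⟨B, hB, C, hC, hBC⟩
      have hcard1 : P₁.card ≤ n := by
        rw [hP₁def]
        have h1 : ((P.erase B).erase C).card = P.card - 2 := by
          rw [card_erase_of_mem hCe, card_erase_of_mem hB]
          omega
        have := card_insert_le (B ∪ C) ((P.erase B).erase C)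
        omega
      have hbiU : P₁.biUnion id = P.biUnion id := by
        ext a
        simp only [mem_biUnion, id]
        constructor
        · rintro ⟨D, hD, haD⟩
          rcases mem_insert.mp hD with rfl | hD'
          · rcases mem_union.mp haD with h | h
            exacts [⟨B, hB, h⟩, ⟨C, hC, h⟩]
          · exact ⟨D, (mem_erase.mp (mem_erase.mp hD').2).2, haD⟩
        · rintro ⟨D, hD, haD⟩
          by_cases h1 : D = B
          · exact ⟨B ∪ C, mem_insert_self _ _, mem_union_left _ (h1 ▸ haD)⟩
          by_cases h2 : D = C
          · exact ⟨B ∪ C, mem_insert_self _ _, mem_union_right _ (h2 ▸ haD)⟩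
          · exact ⟨D, mem_insert_of_mem (mem_erase.mpr ⟨h2, mem_erase.mpr ⟨h1, hD⟩⟩), haD⟩
      have hmemP₁ : ∀ D ∈ P₁, D = B ∪ C ∨ (D ∈ P ∧ D ≠ B ∧ D ≠ C) := by
        intro D hD
        rcases mem_insert.mp hD with h | h
        · exact Or.inl h
        · have h' := mem_erase.mp h
          have h'' := mem_erase.mp h'.2
          exact Or.inr ⟨h''.2, h''.1, h'.1⟩
      have hdisjBC : Disjoint B C := hdis B hB C hC hBC
      have hne₁ : ∀ D ∈ P₁, D.Nonempty := by
        intro D hD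
        rcases hmemP₁ D hD with rfl | ⟨hDP, _, _⟩
        · exact (hne B hB).mono subset_union_left
        · exact hne D hDP
      have hdis₁ : ∀ D ∈ P₁, ∀ E ∈ P₁, D ≠ E → Disjoint D E := by
        intro D hD E hE hDE
        rcases hmemP₁ D hD with rfl | ⟨hDP, hDB, hDC⟩ <;>
          rcases hmemP₁ E hE with rfl | ⟨hEP, hEB, hEC⟩
        · exact absurd rfl hDE
        · exact disjoint_union_left.mpr
            ⟨hdis B hB E hEP (Ne.symm hEB), hdis C hC E hEP (Ne.symm hEC)⟩
        · exact (disjoint_union_left.mpr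
            ⟨hdis B hB D hDP (Ne.symm hDB), hdis C hC D hDP (Ne.symm hDC)⟩).symm
        · exact hdis D hDP E hEP hDE
      have htight₁ : ∀ D ∈ P₁, tightB L p D := by
        intro D hD
        rcases hmemP₁ D hD with rfl | ⟨hDP, _, _⟩
        · exact tightB_union hL (htight B hB) (htight C hC) hdisjBC hnsep
        · exact htight D hDP
      obtain ⟨P', h1, h2, h3, h4, h5⟩ := ih P₁ hcard1 hne₁ hdis₁ htight₁
      exact ⟨P', h1.trans hbiU, h2, h3, h4, h5⟩

lemma exists_sep_partition (L : ℝ) (hL : 0 ≤ L) [DecidableEq ι] (p : ι → Fin d → ℤ)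
    (V : Finset ι) :
    ∃ P : Finset (Finset ι), P.biUnion id = V ∧
      (∀ B ∈ P, B.Nonempty) ∧
      (∀ B ∈ P, ∀ C ∈ P, B ≠ C → Disjoint B C) ∧
      (∀ B ∈ P, tightB L p B) ∧
      (∀ B ∈ P, ∀ C ∈ P, B ≠ C → sepB L p B C) := by
  set P₀ : Finset (Finset ι) := V.image fun a => {a} with hP₀
  have hbi : P₀.biUnion id = V := by
    ext a; simp [hP₀]
  have hne : ∀ B ∈ P₀, B.Nonempty := by
    intro B hB; simp only [hP₀, mem_image] at hB
    obtain ⟨a, _, rfl⟩ := hB; exact singleton_nonempty a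
  have hdis : ∀ B ∈ P₀, ∀ C ∈ P₀, B ≠ C → Disjoint B C := by
    intro B hB C hC hBC
    simp only [hP₀, mem_image] at hB hC
    obtain ⟨a, _, rfl⟩ := hB; obtain ⟨b, _, rfl⟩ := hC
    simp only [disjoint_singleton_left, mem_singleton]
    intro h; exact hBC (by rw [h])
  have htight : ∀ B ∈ P₀, tightB L p B := by
    intro B hB
    simp only [hP₀, mem_image] at hB
    obtain ⟨a, _, rfl⟩ := hB
    intro u hu v hv
    rw [mem_singleton] at hu hv
    subst hu; subst hv
    simp [dist_self]
  obtain ⟨P, h1, h2, h3, h4, h5⟩ := improve L hL p P₀.card P₀ le_rfl hne hdis htight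
  exact ⟨P, h1.trans hbi, h2, h3, h4, h5⟩

end SepProof

open Finset SepProof in
/-- Core lemma: given index sets `S`, `T` with all cross distances `> 2(N+1)L` and
`N + 1 ≤ |S| + |T|`, `|S| ≤ |T|`, the cube around `x` is weakly separable from that of `y`. -/
lemma core_lemma {d N : ℕ} (L : ℝ) (hL : 0 ≤ L) (x y : Fin N → Fin d → ℤ)
    (S T : Finset (Fin N))
    (hST : ∀ i ∈ S, ∀ j ∈ T, 2 * ((N : ℝ) + 1) * L < dist (x i) (y j))
    (hN : N + 1 ≤ S.card + T.card) (hle : S.card ≤ T.card) :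
    WeaklySepFrom L x y := by
  classical
  set p : (Fin N ⊕ Fin N) → Fin d → ℤ := Sum.elim x y with hp
  set V : Finset (Fin N ⊕ Fin N) := S.image Sum.inl ∪ Tᶜ.image Sum.inr with hV
  have hdisjV : Disjoint (S.image (Sum.inl : Fin N → Fin N ⊕ Fin N))
      (Tᶜ.image (Sum.inr : Fin N → Fin N ⊕ Fin N)) := by
    rw [disjoint_left]
    rintro a ha hb
    simp only [mem_image] at ha hb
    obtain ⟨i, _, rfl⟩ := ha
    obtain ⟨j, _, h⟩ := hb
    exact absurd h (by simp)
  have hTN : T.card ≤ N := by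
    have := card_le_univ T; simpa using this
  have hVcard : V.card = S.card + (N - T.card) := by
    rw [hV, card_union_of_disjoint hdisjV,
      card_image_of_injective _ Sum.inl_injective,
      card_image_of_injective _ Sum.inr_injective, card_compl]
    simp
  have hVN : V.card ≤ N := by omega
  have hinlV : ∀ i : Fin N, Sum.inl i ∈ V ↔ i ∈ S := by
    intro i; simp [hV]
  have hinrV : ∀ j : Fin N, Sum.inr j ∈ V ↔ j ∉ T := by
    intro j; simp [hV]
  obtain ⟨P, hbi, hPne, hPdis, hPtight, hPsep⟩ := exists_sep_partition L hL p V
  -- counting: some block has more inl's than inr's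
  have hsum : ∀ (φ : Fin N ⊕ Fin N → Prop) [DecidablePred φ],
      ∑ B ∈ P, (B.filter φ).card = (V.filter φ).card := by
    intro φ _
    have hdj : ∀ B ∈ P, ∀ C ∈ P, B ≠ C →
        Disjoint (Finset.filter φ (id B)) (Finset.filter φ (id C)) := by
      intro B hB C hC hBC
      exact (hPdis B hB C hC hBC).mono (filter_subset _ _) (filter_subset _ _)
    rw [← hbi, filter_biUnion, card_biUnion hdj]
    simp only [id]
  have hexB : ∃ B ∈ P, (B.filter fun a => a.isRight).card < (B.filter fun a => a.isLeft).card := by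
    by_contra hcon
    push_neg at hcon
    have h1 : (V.filter fun a => a.isLeft).card ≤ (V.filter fun a => a.isRight).card := by
      rw [← hsum (fun a => a.isLeft), ← hsum (fun a => a.isRight)]
      exact Finset.sum_le_sum hcon
    have hfl : V.filter (fun a => a.isLeft) = S.image Sum.inl := by
      ext a
      rcases a with i | j <;> simp [hV]
    have hfr : V.filter (fun a => a.isRight) = Tᶜ.image Sum.inr := by
      ext a
      rcases a with i | j <;> simp [hV]
    rw [hfl, hfr, card_image_of_injective _ Sum.inl_injective,
      card_image_of_injective _ Sum.inr_injective, card_compl] at h1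
    simp only [Fintype.card_fin] at h1
    omega
  obtain ⟨B, hBP, hcnt⟩ := hexB
  have hBsub : B ⊆ V := by
    intro a ha
    rw [← hbi]
    exact mem_biUnion.mpr ⟨B, hBP, ha⟩
  have hBLne : (B.filter fun a => a.isLeft).Nonempty := card_pos.mp (by omega)
  obtain ⟨u₀, hu₀⟩ := hBLne
  rw [mem_filter] at hu₀
  obtain ⟨i₀, hi₀⟩ : ∃ i₀ : Fin N, Sum.inl i₀ ∈ B := by
    rcases u₀ with i | j
    · exact ⟨i, hu₀.1⟩
    · simp at hu₀
  have hi₀S : i₀ ∈ S := (hinlV i₀).mp (hBsub hi₀)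
  have hBne : B.Nonempty := ⟨_, hi₀⟩
  have hBcard : B.card ≤ N := (card_le_card hBsub).trans hVN
  have hB1 : 1 ≤ B.card := card_pos.mpr hBne
  set M : ℤ := ⌊L⌋ with hM
  have hM0 : (0 : ℤ) ≤ M := Int.floor_nonneg.mpr hL
  have hML : (M : ℝ) ≤ L := Int.floor_le L
  set lo : Fin d → ℤ := fun i => B.inf' hBne fun u => p u i with hlo
  set hi : Fin d → ℤ := fun i => B.sup' hBne fun u => p u i with hhi
  set Q : Set (Fin d → ℤ) := {z | ∀ i, lo i - M ≤ z i ∧ z i ≤ hi i + M} with hQ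
  -- tightness in real coordinates
  have htight : ∀ u ∈ B, ∀ v ∈ B, ∀ i,
      |(p u i : ℝ) - (p v i : ℝ)| ≤ 2 * ((N : ℝ) - 1) * L := by
    intro u hu v hv i
    have h := coord_abs_le p (hPtight B hBP u hu v hv) i
    have : 2 * ((B.card : ℝ) - 1) * L ≤ 2 * ((N : ℝ) - 1) * L := by
      have : (B.card : ℝ) ≤ (N : ℝ) := by exact_mod_cast hBcard
      nlinarith
    linarith
  have hhilo : ∀ i, (hi i : ℝ) - (lo i : ℝ) ≤ 2 * ((N : ℝ) - 1) * L := by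
    intro i
    obtain ⟨u, hu, hu'⟩ := exists_mem_eq_sup' hBne (fun u => p u i)
    obtain ⟨v, hv, hv'⟩ := exists_mem_eq_inf' hBne (fun u => p u i)
    have := htight u hu v hv i
    rw [abs_le] at this
    rw [hhi, hlo]
    simp only [hu', hv']
    linarith [this.1]
  have hloin : ∀ u ∈ B, ∀ i, lo i ≤ p u i ∧ p u i ≤ hi i := by
    intro u hu i
    simp only [hlo, hhi]
    exact ⟨inf'_le _ hu, le_sup' (fun u => p u i) hu⟩
  refine ⟨Q, ⟨fun i => lo i - M, fun i => hi i + M, rfl⟩, ?_, ?_⟩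
  · -- diameter bound
    apply Metric.diam_le_of_forall_dist_le (by positivity)
    intro z hz w hw
    rw [dist_pi_le_iff (by positivity)]
    intro i
    rw [Int.dist_eq]
    obtain ⟨hz1, hz2⟩ := hz i
    obtain ⟨hw1, hw2⟩ := hw i
    have habs : |z i - w i| ≤ (hi i + M) - (lo i - M) := by
      rw [abs_le]; omega
    have habs' : |(z i : ℝ) - (w i : ℝ)| ≤ ((hi i : ℝ) + M) - ((lo i : ℝ) - M) := by
      exact_mod_cast habs
    have := hhilo i
    have hNr : (1 : ℝ) ≤ (N : ℝ) := by
      exact_mod_cast hB1.trans hBcard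
    nlinarith
  · set J₁ : Finset (Fin N) := univ.filter (fun i => Sum.inl i ∈ B) with hJ₁
    set J₂ : Finset (Fin N) := univ.filter (fun j => Sum.inr j ∈ B) with hJ₂
    have hJ₁card : (B.filter fun a => a.isLeft) = J₁.image Sum.inl := by
      ext a
      rcases a with i | j <;> simp [hJ₁]
    have hJ₂card : (B.filter fun a => a.isRight) = J₂.image Sum.inr := by
      ext a
      rcases a with i | j <;> simp [hJ₂]
    refine ⟨J₁, J₂, ?_, ?_, ?_⟩
    · have h1 : (B.filter fun a => a.isLeft).card = J₁.card := by
        rw [hJ₁card, card_image_of_injective _ Sum.inl_injective]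
      have h2 : (B.filter fun a => a.isRight).card = J₂.card := by
        rw [hJ₂card, card_image_of_injective _ Sum.inr_injective]
      omega
    · -- containment
      rintro z (hz | hz)
      · rw [proj, Set.mem_iUnion₂] at hz
        obtain ⟨j, hj, v, hv, hvz⟩ := hz
        rw [hJ₁, mem_filter] at hj
        have hjB : Sum.inl j ∈ B := hj.2
        intro i
        have hclose : dist (v j i) (x j i) ≤ L :=
          ((dist_le_pi_dist (v j) (x j) i).trans ((dist_le_pi_dist v x j).trans hv))
        obtain ⟨hc1, hc2⟩ := int_close hclose
        have := hloin _ hjB i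
        simp only [hp, Sum.elim_inl] at this
        have hvz' : v j = z := hvz
        rw [← hvz']
        constructor <;> [skip; skip] <;> omega
      · rw [proj, Set.mem_iUnion₂] at hz
        obtain ⟨j, hj, v, hv, hvz⟩ := hz
        rw [hJ₂, mem_filter] at hj
        have hjB : Sum.inr j ∈ B := hj.2
        intro i
        have hclose : dist (v j i) (y j i) ≤ L :=
          ((dist_le_pi_dist (v j) (y j) i).trans ((dist_le_pi_dist v y j).trans hv))
        obtain ⟨hc1, hc2⟩ := int_close hclose
        have := hloin _ hjB i
        simp only [hp, Sum.elim_inr] at this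
        have hvz' : v j = z := hvz
        rw [← hvz']
        constructor <;> [skip; skip] <;> omega
    · -- disjointness
      rw [Set.eq_empty_iff_forall_notMem]
      rintro z ⟨hzp, hzQ⟩
      rw [proj, Set.mem_iUnion₂] at hzp
      obtain ⟨j, hj, v, hv, hvz⟩ := hzp
      have hvz' : v j = z := hvz
      have hjB : Sum.inr j ∉ B := by
        intro h
        exact (Finset.mem_compl.mp hj) (by rw [hJ₂]; exact mem_filter.mpr ⟨mem_univ _, h⟩)
      have hvyc : ∀ c, (y j c : ℝ) - M ≤ (v j c : ℝ) ∧ (v j c : ℝ) ≤ (y j c : ℝ) + M := by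
        intro c
        have hclose : dist (v j c) (y j c) ≤ L :=
          ((dist_le_pi_dist (v j) (y j) c).trans ((dist_le_pi_dist v y j).trans hv))
        obtain ⟨hc1, hc2⟩ := int_close hclose
        constructor <;> exact_mod_cast by omega
      by_cases hjV : Sum.inr j ∈ V
      · -- j is a "free" index, lying in another block
        rw [← hbi] at hjV
        obtain ⟨C, hCP, hjC⟩ := mem_biUnion.mp hjV
        simp only [id] at hjC
        have hCB : B ≠ C := fun h => hjB (h ▸ hjC)
        obtain ⟨c, hcase⟩ := hPsep B hBP C hCP hCB
        obtain ⟨hzQ1, hzQ2⟩ := hzQ c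
        rcases hcase with hcase | hcase
        · -- all of B is below y j (by more than 2L) in coordinate c
          obtain ⟨u, hu, hu'⟩ := exists_mem_eq_sup' hBne (fun u => p u c)
          have h1 := hcase u hu _ hjC
          simp only [hp, Sum.elim_inr] at h1
          have hhiu : hi c = p u c := by simp only [hhi]; exact hu'
          rw [hhiu] at hzQ2
          have h2 : (z c : ℝ) ≤ (p u c : ℝ) + M := by exact_mod_cast hzQ2
          have h3 := (hvyc c).1
          rw [hvz'] at h3
          linarith
        · obtain ⟨u, hu, hu'⟩ := exists_mem_eq_inf' hBne (fun u => p u c)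
          have h1 := hcase u hu _ hjC
          simp only [hp, Sum.elim_inr] at h1
          have hlou : lo c = p u c := by simp only [hlo]; exact hu'
          rw [hlou] at hzQ1
          have h2 : (p u c : ℝ) - M ≤ (z c : ℝ) := by exact_mod_cast hzQ1
          have h3 := (hvyc c).2
          rw [hvz'] at h3
          linarith
      · -- j ∈ T : very far from x i₀
        have hjT : j ∈ T := by
          by_contra h
          exact hjV ((hinrV j).mpr h)
        have hdfar := hST i₀ hi₀S j hjT
        have hex : ∃ c, 2 * ((N : ℝ) + 1) * L < |(x i₀ c : ℝ) - (y j c : ℝ)| := by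
          by_contra h
          push_neg at h
          have : dist (x i₀) (y j) ≤ 2 * ((N : ℝ) + 1) * L := by
            rw [dist_pi_le_iff (by positivity)]
            intro c
            rw [Int.dist_eq]
            exact h c
          linarith
        obtain ⟨c, hc⟩ := hex
        obtain ⟨hzQ1, hzQ2⟩ := hzQ c
        have h3 := hvyc c
        rw [hvz'] at h3
        have hNr : (1 : ℝ) ≤ (N : ℝ) := by exact_mod_cast hB1.trans hBcard
        rcases lt_abs.mp hc with hcc | hcc
        · -- x i₀ c much bigger than y j c ⇒ lo c is big
          obtain ⟨u, hu, hu'⟩ := exists_mem_eq_inf' hBne (fun u => p u c)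
          have hlou : lo c = p u c := by simp only [hlo]; exact hu'
          rw [hlou] at hzQ1
          have h2l : (p u c : ℝ) - M ≤ (z c : ℝ) := by exact_mod_cast hzQ1
          have ht := htight _ hi₀ u hu c
          simp only [hp, Sum.elim_inl] at ht
          rw [abs_le] at ht
          nlinarith [ht.1, h3.2]
        · obtain ⟨u, hu, hu'⟩ := exists_mem_eq_sup' hBne (fun u => p u c)
          have hhiu : hi c = p u c := by simp only [hhi]; exact hu'
          rw [hhiu] at hzQ2
          have h2u : (z c : ℝ) ≤ (p u c : ℝ) + M := by exact_mod_cast hzQ2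
          have ht := htight _ hi₀ u hu c
          simp only [hp, Sum.elim_inl] at ht
          rw [abs_le] at ht
          nlinarith [ht.2, h3.1]

/-- If `d_S(x,y) > 2(N+1)L` (symmetrized max-norm distance), then the pair of cubes
`C_L(x), C_L(y)` is weakly separable: one of the cubes is weakly separable from the other. -/
theorem distant_cubes_weakly_separable {d N : ℕ} (L : ℝ) (hL : 0 ≤ L)
    (x y : Fin N → Fin d → ℤ)
    (hfar : ∀ τ : Equiv.Perm (Fin N), ∃ j, 2 * ((N : ℝ) + 1) * L < dist (x (τ j)) (y j)) :
    WeaklySepFrom L x y ∨ WeaklySepFrom L y x := by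
  classical
  open Finset in
  set D := 2 * ((N : ℝ) + 1) * L with hD
  set t : Fin N → Finset (Fin N) := fun i => univ.filter fun j => dist (x i) (y j) ≤ D with ht
  by_cases hhall : ∀ s : Finset (Fin N), s.card ≤ (s.biUnion t).card
  · exfalso
    obtain ⟨f, hfinj, hf⟩ := (Finset.all_card_le_biUnion_card_iff_exists_injective t).mp hhall
    have hbij : Function.Bijective f := Finite.injective_iff_bijective.mp hfinj
    set e := Equiv.ofBijective f hbij with he
    obtain ⟨j, hj⟩ := hfar e.symm
    have h1 : dist (x (e.symm j)) (y (f (e.symm j))) ≤ D := by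
      have := hf (e.symm j)
      rw [ht] at this
      simpa using this
    have h2 : f (e.symm j) = j := e.apply_symm_apply j
    rw [h2] at h1
    exact absurd hj (not_lt.mpr h1)
  · push_neg at hhall
    obtain ⟨S, hS⟩ := hhall
    set T : Finset (Fin N) := (S.biUnion t)ᶜ with hT
    have hST : ∀ i ∈ S, ∀ j ∈ T, D < dist (x i) (y j) := by
      intro i hi j hj
      by_contra h
      push_neg at h
      have : j ∈ S.biUnion t := mem_biUnion.mpr ⟨i, hi, by rw [ht]; exact mem_filter.mpr ⟨mem_univ _, h⟩⟩
      exact (mem_compl.mp hj) this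
    have hTcard : T.card = N - (S.biUnion t).card := by
      rw [hT, card_compl]; simp
    have hbU : (S.biUnion t).card ≤ N := by
      have := card_le_univ (S.biUnion t); simpa using this
    have hNcard : N + 1 ≤ S.card + T.card := by omega
    by_cases hle : S.card ≤ T.card
    · exact Or.inl (core_lemma L hL x y S T hST hNcard hle)
    · refine Or.inr (core_lemma L hL y x T S ?_ (by omega) (by omega))
      intro i hi j hj
      rw [dist_comm]
      exact hST j hj i hi
end
end
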